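/- Let I : ℝ² → ℝ be continuous with compact support, let β > 0, let w > 0, and let V be the closed subspace of L²(ℝ²) consisting of functions supported in C = [−w/2, w/2]². Then the single-layer map Φ : V → L²(ℝ²) defined by Φ(K) = r_β ∘ (K ⋆ I) is Fréchet differentiable at every K ∈ V, with derivative given by δK ↦ r_β'(K ⋆ I) · (δK ⋆ I); i.e., the derivative of the layer output with respect to the kernel at K in direction δK is the pointwise product of r_β'((K ⋆ I)(x)) with (δK ⋆ I)(x). -/

import Mathlib

open MeasureTheory

/-- The cross-correlation `(f ⋆ g)(z) = ∫_{ℝ²} f(x)·g(x + z) dx`. -/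
noncomputable def crossCorr (f g : ℝ × ℝ → ℝ) (z : ℝ × ℝ) : ℝ :=
  ∫ x : ℝ × ℝ, f x * g (x + z)

/-- The Swish activation `r_β(x) = x/(1 + exp(−βx))`. -/
noncomputable def swish (β x : ℝ) : ℝ := x / (1 + Real.exp (-β * x))

/-- The closed subspace of `L²(ℝ²)` of functions (a.e.) supported in `C`. -/
noncomputable def suppSubmodule (C : Set (ℝ × ℝ)) :
    Submodule ℝ (Lp ℝ 2 (volume : Measure (ℝ × ℝ))) where
  carrier := {f | ∀ᵐ x : ℝ × ℝ, x ∉ C → f x = 0}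
  add_mem' := by
    intro f g hf hg
    filter_upwards [hf, hg, Lp.coeFn_add f g] with x h1 h2 h3 hx
    simp only [h3, Pi.add_apply, h1 hx, h2 hx, add_zero]
  zero_mem' := by
    filter_upwards [Lp.coeFn_zero ℝ 2 (volume : Measure (ℝ × ℝ))] with x h _
    simp [h]
  smul_mem' := by
    intro c f hf
    filter_upwards [hf, Lp.coeFn_smul c f] with x h1 h2 hx
    simp [h2, h1 hx]

/-!
The map `K ↦ K ⋆ I` is linear from `V` into functions vanishing off the fixed compact set
`tsupport I - C`, and by Cauchy–Schwarz and translation invariance `|(K ⋆ I)(z)| ≤ ‖I‖₂ ‖K‖₂`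
for every `z`. Writing `r_β(x) = x σ(βx)` with the logistic `σ`, the bounds `σ(1 - σ) ≤ 1/4`
and `|t| σ(t)(1 - σ(t)) ≤ 1` give `|r_β'| ≤ 2` and `|r_β''| ≤ 3|β|/2`, hence
`|r_β(a + d) - r_β(a) - r_β'(a) d| ≤ (3|β|/2) d²`. Applied pointwise with `a = K ⋆ I` and
`d = δK ⋆ I`, the remainder of `Φ` is bounded by a multiple of `‖δK‖²` on a set of finite measure,
so its `L²` norm is `O(‖δK‖²)`.
-/

section Swish

open Real

lemma sigmoid_mul_one_sub_sigmoid_le (t : ℝ) : sigmoid t * (1 - sigmoid t) ≤ 1 / 4 := by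
  nlinarith [sq_nonneg (2 * sigmoid t - 1)]

lemma abs_mul_sigmoid_mul_one_sub_sigmoid_le_one (t : ℝ) :
    |t| * (sigmoid t * (1 - sigmoid t)) ≤ 1 := by
  have key : ∀ s, 0 ≤ s → s * (sigmoid s * (1 - sigmoid s)) ≤ 1 := by
    intro s hs
    have hσ : 1 - sigmoid s = (1 + exp s)⁻¹ := by rw [← sigmoid_neg, sigmoid_def, neg_neg]
    calc s * (sigmoid s * (1 - sigmoid s)) ≤ s * (1 - sigmoid s) := by
          gcongr
          exact mul_le_of_le_one_left (sub_nonneg.2 (sigmoid_le_one s)) (sigmoid_le_one s)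
      _ ≤ 1 := by
          rw [hσ, ← div_eq_mul_inv, div_le_one (by positivity)]
          linarith [add_one_le_exp s]
  rcases le_total 0 t with ht | ht
  · rw [abs_of_nonneg ht]
    exact key t ht
  · have := key (-t) (neg_nonneg.2 ht)
    rw [sigmoid_neg] at this
    rw [abs_of_nonpos ht]
    linarith

lemma swish_eq_mul_sigmoid (β x : ℝ) : swish β x = x * sigmoid (β * x) := by
  rw [swish, sigmoid_def, neg_mul, div_eq_mul_inv]

noncomputable def swishDeriv (β x : ℝ) : ℝ :=
  sigmoid (β * x) + β * x * (sigmoid (β * x) * (1 - sigmoid (β * x)))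

noncomputable def swishDeriv2 (β x : ℝ) : ℝ :=
  β * (sigmoid (β * x) * (1 - sigmoid (β * x))) * (2 + β * x * (1 - 2 * sigmoid (β * x)))

lemma hasDerivAt_sigmoid_const_mul (β x : ℝ) :
    HasDerivAt (fun y => sigmoid (β * y)) (sigmoid (β * x) * (1 - sigmoid (β * x)) * β) x :=
  (hasDerivAt_sigmoid (β * x)).comp x ((hasDerivAt_id x).const_mul β |>.congr_deriv (mul_one β))

lemma hasDerivAt_swish (β x : ℝ) : HasDerivAt (swish β) (swishDeriv β x) x := by
  rw [show swish β = fun y => y * sigmoid (β * y) from funext (swish_eq_mul_sigmoid β)]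
  exact ((hasDerivAt_id' x).fun_mul (hasDerivAt_sigmoid_const_mul β x)).congr_deriv
    (by rw [swishDeriv]; ring)

lemma deriv_swish (β : ℝ) : deriv (swish β) = swishDeriv β :=
  funext fun x => (hasDerivAt_swish β x).deriv

lemma hasDerivAt_swishDeriv (β x : ℝ) : HasDerivAt (swishDeriv β) (swishDeriv2 β x) x := by
  have hσ := hasDerivAt_sigmoid_const_mul β x
  have hlin : HasDerivAt (fun y => β * y) β x :=
    (hasDerivAt_id x).const_mul β |>.congr_deriv (mul_one β)
  exact (hσ.fun_add (hlin.fun_mul (hσ.fun_mul (hσ.const_sub 1)))).congr_deriv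
    (by rw [swishDeriv2]; ring)

lemma continuous_swishDeriv (β : ℝ) : Continuous (swishDeriv β) :=
  continuous_iff_continuousAt.2 fun x => (hasDerivAt_swishDeriv β x).continuousAt

lemma abs_swishDeriv_le (β x : ℝ) : |swishDeriv β x| ≤ 2 := by
  have h := abs_mul_sigmoid_mul_one_sub_sigmoid_le_one (β * x)
  have h0 := sigmoid_nonneg (β * x)
  have h1 := sigmoid_le_one (β * x)
  have hp : 0 ≤ sigmoid (β * x) * (1 - sigmoid (β * x)) := mul_nonneg h0 (by linarith)
  calc |swishDeriv β x|
      ≤ |sigmoid (β * x)| + |β * x * (sigmoid (β * x) * (1 - sigmoid (β * x)))| :=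
        abs_add_le _ _
    _ ≤ 2 := by rw [abs_mul, abs_of_nonneg hp, abs_of_nonneg h0]; linarith

lemma abs_swishDeriv2_le (β x : ℝ) : |swishDeriv2 β x| ≤ 3 / 2 * |β| := by
  set s := sigmoid (β * x)
  have hp : 0 ≤ s * (1 - s) :=
    mul_nonneg (sigmoid_nonneg _) (by linarith [sigmoid_le_one (β * x)])
  have hq : s * (1 - s) ≤ 1 / 4 := sigmoid_mul_one_sub_sigmoid_le _
  have hr : |β * x| * (s * (1 - s)) ≤ 1 := abs_mul_sigmoid_mul_one_sub_sigmoid_le_one _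
  have hs : |1 - 2 * s| ≤ 1 :=
    abs_le.2 ⟨by linarith [sigmoid_le_one (β * x)], by linarith [sigmoid_nonneg (β * x)]⟩
  have hinner : s * (1 - s) * |2 + β * x * (1 - 2 * s)| ≤ 3 / 2 := by
    calc s * (1 - s) * |2 + β * x * (1 - 2 * s)|
        ≤ s * (1 - s) * (2 + |β * x|) := by
          gcongr
          calc |2 + β * x * (1 - 2 * s)| ≤ 2 + |β * x| * |1 - 2 * s| := by
                rw [← abs_mul]; exact (abs_add_le _ _).trans (by norm_num)
            _ ≤ 2 + |β * x| := by gcongr; nlinarith [abs_nonneg (β * x)]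
      _ ≤ 3 / 2 := by nlinarith
  rw [swishDeriv2, abs_mul, abs_mul, abs_of_nonneg hp, mul_assoc]
  nlinarith [abs_nonneg β]

lemma abs_sub_sub_mul_le_of_abs_deriv2_le {f f' f'' : ℝ → ℝ} {M : ℝ}
    (hf : ∀ x, HasDerivAt f (f' x) x) (hf' : ∀ x, HasDerivAt f' (f'' x) x)
    (hM : ∀ x, |f'' x| ≤ M) (a d : ℝ) : |f (a + d) - f a - f' a * d| ≤ M * d ^ 2 := by
  have hlip : ∀ x, |f' x - f' a| ≤ M * |x - a| := fun x => by
    simpa only [Real.norm_eq_abs] using Convex.norm_image_sub_le_of_norm_hasDerivWithin_le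
      (fun y _ => (hf' y).hasDerivWithinAt) (fun y _ => hM y) convex_univ (Set.mem_univ a)
      (Set.mem_univ x)
  have hball : ∀ x ∈ Metric.closedBall a |d|, |f' x - f' a| ≤ M * |d| := fun x hx =>
    (hlip x).trans
      (mul_le_mul_of_nonneg_left (Real.dist_eq x a ▸ hx) ((abs_nonneg _).trans (hM 0)))
  have h := Convex.norm_image_sub_le_of_norm_hasDerivWithin_le (f := fun x => f x - f' a * x)
    (fun x _ => ((hf x).sub ((hasDerivAt_id x).const_mul (f' a))).hasDerivWithinAt)
    (fun x hx => by simpa only [Real.norm_eq_abs, id, mul_one] using hball x hx)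
    (convex_closedBall a |d|) (Metric.mem_closedBall_self (abs_nonneg d))
    (by rw [Metric.mem_closedBall, Real.dist_eq, add_sub_cancel_left])
  simp only [Real.norm_eq_abs, add_sub_cancel_left] at h
  calc |f (a + d) - f a - f' a * d| = |f (a + d) - f' a * (a + d) - (f a - f' a * a)| := by
        ring_nf
    _ ≤ M * |d| * |d| := h
    _ = M * d ^ 2 := by rw [mul_assoc, ← abs_mul, ← sq, abs_sq]

end Swish

open MeasureTheory Filter Asymptotics
open scoped ENNReal Pointwise

section BoundedSupport

variable {α : Type*} [MeasurableSpace α] {μ : Measure α} {S : Set α} {f : α → ℝ} {c : ℝ}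

lemma eLpNorm_two_le_of_abs_le_of_eq_zero (hf : ∀ x, |f x| ≤ c) (hS : ∀ x ∉ S, f x = 0) :
    eLpNorm f 2 μ ≤ μ S ^ (1 / 2 : ℝ) * ENNReal.ofReal c := by
  rw [← eLpNorm_restrict_eq_of_support_subset (Function.support_subset_iff'.2 hS)]
  simpa using eLpNorm_le_of_ae_bound (μ := μ.restrict S) (p := 2) (ae_of_all _ hf)

lemma memLp_two_of_abs_le_of_eq_zero (hm : AEStronglyMeasurable f μ) (hSfin : μ S ≠ ∞)
    (hf : ∀ x, |f x| ≤ c) (hS : ∀ x ∉ S, f x = 0) : MemLp f 2 μ :=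
  ⟨hm, (eLpNorm_two_le_of_abs_le_of_eq_zero hf hS).trans_lt <|
    ENNReal.mul_lt_top (ENNReal.rpow_lt_top_of_nonneg (by norm_num) hSfin) ENNReal.ofReal_lt_top⟩

lemma Lp.norm_le_of_abs_le_of_eq_zero {F : Lp ℝ 2 μ} (hF : F =ᵐ[μ] f) (hc : 0 ≤ c)
    (hSfin : μ S ≠ ∞) (hf : ∀ x, |f x| ≤ c) (hS : ∀ x ∉ S, f x = 0) :
    ‖F‖ ≤ (μ S ^ (1 / 2 : ℝ)).toReal * c := by
  rw [Lp.norm_def, eLpNorm_congr_ae hF, ← ENNReal.toReal_ofReal hc, ← ENNReal.toReal_mul]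
  exact ENNReal.toReal_mono
    (ENNReal.mul_ne_top (ENNReal.rpow_ne_top_of_nonneg (by norm_num) hSfin) ENNReal.ofReal_ne_top)
    (eLpNorm_two_le_of_abs_le_of_eq_zero hf hS)

end BoundedSupport

section Superposition

variable {α E : Type*} [MeasurableSpace α] {μ : Measure α} [NormedAddCommGroup E]
  [NormedSpace ℝ E] {S : Set α} {c : ℝ} {T : E →ₗ[ℝ] α → ℝ}

lemma exists_clm_ae_eq_mul (hSfin : μ S ≠ ∞) (hc : 0 ≤ c)
    (hTm : ∀ h, AEStronglyMeasurable (T h) μ) (hT0 : ∀ h, ∀ x ∉ S, T h x = 0)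
    (hTc : ∀ h x, |T h x| ≤ c * ‖h‖) {g : α → ℝ} {M : ℝ} (hgm : AEStronglyMeasurable g μ)
    (hM : 0 ≤ M) (hg : ∀ x, |g x| ≤ M) :
    ∃ D : E →L[ℝ] Lp ℝ 2 μ, ∀ h, D h =ᵐ[μ] fun x => g x * T h x := by
  have hbound : ∀ h x, |g x * T h x| ≤ M * (c * ‖h‖) := fun h x => by
    rw [abs_mul]
    exact mul_le_mul (hg x) (hTc h x) (abs_nonneg _) hM
  have hzero : ∀ h, ∀ x ∉ S, g x * T h x = 0 := fun h x hx => by rw [hT0 h x hx, mul_zero]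
  have hmem : ∀ h, MemLp (fun x => g x * T h x) 2 μ := fun h =>
    memLp_two_of_abs_le_of_eq_zero (hgm.mul (hTm h)) hSfin (hbound h) (hzero h)
  let D : E →ₗ[ℝ] Lp ℝ 2 μ :=
    { toFun h := (hmem h).toLp _
      map_add' h₁ h₂ := by
        rw [← MemLp.toLp_add]
        congr 1
        ext x
        simp only [map_add, Pi.add_apply, mul_add]
      map_smul' a h := by
        rw [RingHom.id_apply, ← MemLp.toLp_const_smul]
        congr 1
        ext x
        simp only [map_smul, Pi.smul_apply, smul_eq_mul]
        ring }
  refine ⟨D.mkContinuous ((μ S ^ (1 / 2 : ℝ)).toReal * (M * c)) fun h => ?_,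
    fun h => (hmem h).coeFn_toLp⟩
  calc ‖D h‖ ≤ (μ S ^ (1 / 2 : ℝ)).toReal * (M * (c * ‖h‖)) :=
        Lp.norm_le_of_abs_le_of_eq_zero (hmem h).coeFn_toLp (by positivity) hSfin (hbound h)
          (hzero h)
    _ = _ := by ring

theorem exists_hasFDerivAt_superposition (hSfin : μ S ≠ ∞) (hc : 0 ≤ c)
    (hTm : ∀ h, AEStronglyMeasurable (T h) μ) (hT0 : ∀ h, ∀ x ∉ S, T h x = 0)
    (hTc : ∀ h x, |T h x| ≤ c * ‖h‖) {σ σ' : ℝ → ℝ} {M L : ℝ} (hσ'c : Continuous σ')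
    (hσ'M : ∀ y, |σ' y| ≤ M) (hσ : ∀ a d, |σ (a + d) - σ a - σ' a * d| ≤ L * d ^ 2)
    {Φ : E → Lp ℝ 2 μ} (hΦ : ∀ K, Φ K =ᵐ[μ] fun x => σ (T K x)) (K : E) :
    ∃ D : E →L[ℝ] Lp ℝ 2 μ, HasFDerivAt Φ D K ∧ ∀ h, D h =ᵐ[μ] fun x => σ' (T K x) * T h x := by
  obtain ⟨D, hD⟩ := exists_clm_ae_eq_mul hSfin hc hTm hT0 hTc
    (hσ'c.comp_aestronglyMeasurable (hTm K)) ((abs_nonneg _).trans (hσ'M 0)) fun x => hσ'M _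
  refine ⟨D, ?_, hD⟩
  have hL : 0 ≤ L := by simpa using (abs_nonneg _).trans (hσ 0 1)
  have hrem : ∀ h,
      ‖Φ (K + h) - Φ K - D h‖ ≤ (μ S ^ (1 / 2 : ℝ)).toReal * (L * c ^ 2) * ‖h‖ ^ 2 := by
    intro h
    have hae : ⇑(Φ (K + h) - Φ K - D h) =ᵐ[μ]
        fun x => σ (T K x + T h x) - σ (T K x) - σ' (T K x) * T h x := by
      filter_upwards [Lp.coeFn_sub (Φ (K + h) - Φ K) (D h), Lp.coeFn_sub (Φ (K + h)) (Φ K),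
        hΦ (K + h), hΦ K, hD h] with x h₁ h₂ h₃ h₄ h₅
      rw [h₁, Pi.sub_apply, h₂, Pi.sub_apply, h₃, h₄, h₅, map_add, Pi.add_apply]
    have hsq : ∀ x, T h x ^ 2 ≤ (c * ‖h‖) ^ 2 := fun x => by
      rw [← sq_abs]
      exact pow_le_pow_left₀ (abs_nonneg _) (hTc h x) 2
    calc ‖Φ (K + h) - Φ K - D h‖ ≤ (μ S ^ (1 / 2 : ℝ)).toReal * (L * (c * ‖h‖) ^ 2) :=
          Lp.norm_le_of_abs_le_of_eq_zero hae (by positivity) hSfin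
            (fun x => (hσ _ _).trans (mul_le_mul_of_nonneg_left (hsq x) hL))
            (fun x hx => by simp [hT0 h x hx])
      _ = _ := by ring
  rw [hasFDerivAt_iff_isLittleO_nhds_zero]
  refine (IsBigO.of_bound ((μ S ^ (1 / 2 : ℝ)).toReal * (L * c ^ 2))
    (Eventually.of_forall fun h => ?_)).trans_isLittleO (isLittleO_norm_pow_id one_lt_two)
  simpa only [norm_pow, norm_norm, add_sub_cancel_left] using hrem h

end Superposition

section CrossCorrelation

variable {I : ℝ × ℝ → ℝ}

lemma integrable_mul_comp_add_right {K : ℝ × ℝ → ℝ} (hK : MemLp K 2 volume)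
    (hI : MemLp I 2 volume) (z : ℝ × ℝ) : Integrable (fun x => K x * I (x + z)) volume :=
  hK.integrable_mul (hI.comp_measurePreserving (measurePreserving_add_right volume z))

noncomputable def crossCorrₗ (hI : MemLp I 2 volume) :
    Lp ℝ 2 (volume : Measure (ℝ × ℝ)) →ₗ[ℝ] ℝ × ℝ → ℝ where
  toFun K := crossCorr K I
  map_add' K L := by
    ext z
    rw [Pi.add_apply, crossCorr, crossCorr, crossCorr,
      ← integral_add (integrable_mul_comp_add_right (Lp.memLp K) hI z)
        (integrable_mul_comp_add_right (Lp.memLp L) hI z)]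
    refine integral_congr_ae ?_
    filter_upwards [Lp.coeFn_add K L] with x hx
    rw [hx, Pi.add_apply, add_mul]
  map_smul' a K := by
    ext z
    rw [RingHom.id_apply, Pi.smul_apply, smul_eq_mul, crossCorr, crossCorr,
      ← integral_const_mul]
    refine integral_congr_ae ?_
    filter_upwards [Lp.coeFn_smul a K] with x hx
    rw [hx, Pi.smul_apply, smul_eq_mul, mul_assoc]

lemma abs_crossCorr_le (hI : MemLp I 2 volume) (K : Lp ℝ 2 (volume : Measure (ℝ × ℝ)))
    (z : ℝ × ℝ) : |crossCorr K I z| ≤ (eLpNorm I 2 volume).toReal * ‖K‖ := by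
  have hIz := hI.comp_measurePreserving (measurePreserving_add_right volume z)
  have hinner : crossCorr K I z = inner ℝ (hIz.toLp _) K := by
    rw [crossCorr, L2.inner_def]
    refine integral_congr_ae ?_
    filter_upwards [hIz.coeFn_toLp] with x hx
    rw [hx, RCLike.inner_apply, conj_trivial, Function.comp_apply, mul_comm]
  rw [hinner]
  refine (abs_real_inner_le_norm _ _).trans_eq ?_
  rw [Lp.norm_toLp, eLpNorm_comp_measurePreserving hI.1 (measurePreserving_add_right volume z)]

lemma crossCorr_eq_zero_of_notMem_sub {K : ℝ × ℝ → ℝ} {C : Set (ℝ × ℝ)}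
    (hK : ∀ᵐ x, x ∉ C → K x = 0) {z : ℝ × ℝ} (hz : z ∉ Function.support I - C) :
    crossCorr K I z = 0 := by
  refine integral_eq_zero_of_ae ?_
  filter_upwards [hK] with x hx
  by_cases hxC : x ∈ C
  · have hIz : I (x + z) = 0 := by
      by_contra hne
      exact hz ⟨x + z, hne, x, hxC, add_sub_cancel_left x z⟩
    rw [Pi.zero_apply, hIz, mul_zero]
  · rw [Pi.zero_apply, hx hxC, zero_mul]

lemma continuous_crossCorr {K : ℝ × ℝ → ℝ} (hK : Integrable K volume) (hIc : Continuous I)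
    (hIs : HasCompactSupport I) : Continuous (crossCorr K I) := by
  obtain ⟨B, hB⟩ := hIs.exists_bound_of_continuous hIc
  refine continuous_of_dominated (bound := fun x => ‖K x‖ * B)
    (fun z => hK.aestronglyMeasurable.mul
      (hIc.comp (continuous_add_const z)).aestronglyMeasurable)
    (fun z => ae_of_all _ fun x => ?_) (hK.norm.mul_const B)
    (ae_of_all _ fun x => continuous_const.mul (hIc.comp (continuous_const_add x)))
  rw [norm_mul]
  exact mul_le_mul_of_nonneg_left (hB _) (norm_nonneg _)

lemma integrable_of_mem_suppSubmodule {C : Set (ℝ × ℝ)} (hC : volume C ≠ ∞)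
    (K : suppSubmodule C) : Integrable (K : Lp ℝ 2 (volume : Measure (ℝ × ℝ))) volume := by
  have := isFiniteMeasure_restrict.2 hC
  exact IntegrableOn.integrable_of_ae_notMem_eq_zero
    (((Lp.memLp _).restrict C).integrable one_le_two) K.2

end CrossCorrelation

theorem cnn_layer_kernel_frechet_derivative_general
    (I : ℝ × ℝ → ℝ) (hIc : Continuous I) (hIs : HasCompactSupport I)
    (β : ℝ) (w : ℝ)
    (C : Set (ℝ × ℝ)) (hC : C = Set.Icc (-(w / 2), -(w / 2)) (w / 2, w / 2))
    (Φ : suppSubmodule C → Lp ℝ 2 (volume : Measure (ℝ × ℝ)))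
    (hΦ : ∀ K : suppSubmodule C,
      (Φ K : ℝ × ℝ → ℝ) =ᵐ[volume] fun x =>
        swish β (crossCorr ((K : Lp ℝ 2 (volume : Measure (ℝ × ℝ))) : ℝ × ℝ → ℝ) I x)) :
    ∀ K : suppSubmodule C,
      ∃ D : suppSubmodule C →L[ℝ] Lp ℝ 2 (volume : Measure (ℝ × ℝ)),
        HasFDerivAt Φ D K ∧
        ∀ δK : suppSubmodule C,
          (D δK : ℝ × ℝ → ℝ) =ᵐ[volume] fun x =>
            deriv (swish β)
                (crossCorr ((K : Lp ℝ 2 (volume : Measure (ℝ × ℝ))) : ℝ × ℝ → ℝ) I x) *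
              crossCorr ((δK : Lp ℝ 2 (volume : Measure (ℝ × ℝ))) : ℝ × ℝ → ℝ) I x := by
  intro K
  have hI : MemLp I 2 volume := hIc.memLp_of_hasCompactSupport hIs
  have hCc : IsCompact C := hC ▸ isCompact_Icc
  have hS : IsCompact (tsupport I - C) := by
    simpa only [sub_eq_add_neg] using hIs.isCompact.add hCc.neg
  obtain ⟨D, hD, hDapply⟩ := exists_hasFDerivAt_superposition
    (T := (crossCorrₗ hI).comp (suppSubmodule C).subtype) hS.measure_lt_top.ne
    ENNReal.toReal_nonneg
    (fun h => (continuous_crossCorr (integrable_of_mem_suppSubmodule hCc.measure_lt_top.ne h)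
      hIc hIs).aestronglyMeasurable)
    (fun h z hz => crossCorr_eq_zero_of_notMem_sub h.2
      fun hz' => hz (Set.sub_subset_sub_right (subset_tsupport I) hz'))
    (abs_crossCorr_le hI ·)
    (continuous_swishDeriv β) (abs_swishDeriv_le β)
    (abs_sub_sub_mul_le_of_abs_deriv2_le (hasDerivAt_swish β) (hasDerivAt_swishDeriv β)
      (abs_swishDeriv2_le β)) hΦ K
  exact ⟨D, hD, fun δK => by rw [deriv_swish]; exact hDapply δK⟩

/-- The single convolution-plus-activation layer `Φ(K) = r_β ∘ (K ⋆ I)`, viewed as a map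
from the subspace `V ⊆ L²(ℝ²)` of kernels supported in the square `C = [−w/2, w/2]²`
to `L²(ℝ²)`, is Fréchet differentiable at every `K ∈ V`, with derivative
`δK ↦ r_β'(K ⋆ I)·(δK ⋆ I)` (pointwise product). -/
theorem cnn_layer_kernel_frechet_derivative
    (I : ℝ × ℝ → ℝ) (hIc : Continuous I) (hIs : HasCompactSupport I)
    (β : ℝ) (hβ : 0 < β) (w : ℝ) (hw : 0 < w)
    (C : Set (ℝ × ℝ)) (hC : C = Set.Icc (-(w / 2), -(w / 2)) (w / 2, w / 2))
    (Φ : suppSubmodule C → Lp ℝ 2 (volume : Measure (ℝ × ℝ)))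
    (hΦ : ∀ K : suppSubmodule C,
      (Φ K : ℝ × ℝ → ℝ) =ᵐ[volume] fun x =>
        swish β (crossCorr ((K : Lp ℝ 2 (volume : Measure (ℝ × ℝ))) : ℝ × ℝ → ℝ) I x)) :
    ∀ K : suppSubmodule C,
      ∃ D : suppSubmodule C →L[ℝ] Lp ℝ 2 (volume : Measure (ℝ × ℝ)),
        HasFDerivAt Φ D K ∧
        ∀ δK : suppSubmodule C,
          (D δK : ℝ × ℝ → ℝ) =ᵐ[volume] fun x =>
            deriv (swish β)
                (crossCorr ((K : Lp ℝ 2 (volume : Measure (ℝ × ℝ))) : ℝ × ℝ → ℝ) I x) *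
              crossCorr ((δK : Lp ℝ 2 (volume : Measure (ℝ × ℝ))) : ℝ × ℝ → ℝ) I x :=
  cnn_layer_kernel_frechet_derivative_general I hIc hIs β w C hC Φ hΦ
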